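/- arXiv:0909.1047 — 3 statements merged into one kernel-verified Lean document; each statement's English description precedes it below -/
import Mathlib

section
/- Let H be a complex Hilbert space, let K be a bounded self-adjoint operator on H with K ≥ 0, let A be a bounded self-adjoint operator with A ≥ 1, and set R := K(1+K)^{−1}. If ‖R^{1/2} A R^{1/2}‖ = η < 1, then 1 − K^{1/2}(A − 1)K^{1/2} ≥ (1 − η)·1; in particular K^{1/2}(A − 1)K^{1/2} ≤ η·1 and ‖K^{1/2}(A − 1)K^{1/2}‖ ≤ η < 1. -/
open ContinuousLinearMap

/-!
Put `S = (1 + K)^{1/2}`. The operators `K^{1/2}`, `R^{1/2}` and `S` are all continuous functions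
of `K`, and `√t = √(1 + t) · √(t / (1 + t))` gives `K^{1/2} = S R^{1/2} = R^{1/2} S`. Conjugating
`R^{1/2} A R^{1/2} ≤ η` by the self-adjoint `S` yields `K^{1/2} A K^{1/2} ≤ η (1 + K)`, hence
`K^{1/2} (A - 1) K^{1/2} ≤ η - (1 - η) K ≤ η`.
-/

section CStarAlgebra

variable {𝒜 : Type*} [CStarAlgebra 𝒜]

lemma cfc_one_add_id {k : 𝒜} (hk : IsSelfAdjoint k) : cfc (fun t : ℝ => 1 + t) k = 1 + k := by
  rw [cfc_const_add 1 (fun t : ℝ => t) k continuousOn_id hk, cfc_id' ℝ k, map_one]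

variable [PartialOrder 𝒜] [StarOrderedRing 𝒜]

lemma eq_cfc_inv_one_add_of_mul_eq_one {k j : 𝒜} (hk : 0 ≤ k) (hj : (1 + k) * j = 1) :
    j = cfc (fun t : ℝ => (1 + t)⁻¹) k := by
  have hne (t) (ht : t ∈ spectrum ℝ k) : 1 + t ≠ 0 := by
    have := spectrum_nonneg_of_nonneg hk ht
    positivity
  have hinv : cfc (fun t : ℝ => (1 + t)⁻¹) k * (1 + k) = 1 := by
    rw [← cfc_one_add_id hk.isSelfAdjoint,
      ← cfc_mul (fun t : ℝ => (1 + t)⁻¹) _ k (by fun_prop (disch := exact hne)),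
      cfc_congr fun t ht => inv_mul_cancel₀ (hne t ht), cfc_const_one ℝ k]
  calc j = cfc (fun t : ℝ => (1 + t)⁻¹) k * (1 + k) * j := by rw [hinv, one_mul]
    _ = cfc (fun t : ℝ => (1 + t)⁻¹) k := by rw [mul_assoc, hj, mul_one]

namespace CFC

lemma sqrt_cfc {k : 𝒜} (f : ℝ → ℝ) (hf : ∀ t ∈ spectrum ℝ k, 0 ≤ f t)
    (hfc : ContinuousOn f (spectrum ℝ k) := by cfc_cont_tac) :
    sqrt (cfc f k) = cfc (fun t => √(f t)) k := by
  refine sqrt_unique ?_ (cfc_nonneg fun t _ => Real.sqrt_nonneg _)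
  rw [← cfc_mul .., cfc_congr fun t ht => Real.mul_self_sqrt (hf t ht)]

lemma sqrt_one_add_mul_sqrt_mul_inv {k j : 𝒜} (hk : 0 ≤ k) (hj : (1 + k) * j = 1) :
    sqrt (1 + k) * sqrt (k * j) = sqrt k := by
  have hspec (t) (ht : t ∈ spectrum ℝ k) : 0 ≤ t := spectrum_nonneg_of_nonneg hk ht
  have hne (t) (ht : t ∈ spectrum ℝ k) : 1 + t ≠ 0 := by have := hspec t ht; positivity
  have hcont : ContinuousOn (fun t : ℝ => t * (1 + t)⁻¹) (spectrum ℝ k) := by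
    fun_prop (disch := exact hne)
  have hkj : k * j = cfc (fun t : ℝ => t * (1 + t)⁻¹) k := by
    rw [eq_cfc_inv_one_add_of_mul_eq_one hk hj, cfc_mul (fun t : ℝ => t) _ k
      (hg := by fun_prop (disch := exact hne)), cfc_id' ℝ k]
  rw [hkj, ← cfc_one_add_id hk.isSelfAdjoint,
    sqrt_cfc _ fun t ht => by have := hspec t ht; positivity,
    sqrt_cfc _ (fun t ht => by have := hspec t ht; positivity) hcont,
    ← cfc_mul _ _ k (by fun_prop) hcont.sqrt]
  conv_rhs => rw [← cfc_id' ℝ k, sqrt_cfc _ hspec]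
  refine cfc_congr fun t ht => ?_
  rw [← Real.sqrt_mul (by have := hspec t ht; positivity), mul_left_comm,
    mul_inv_cancel₀ (hne t ht), mul_one]

lemma sqrt_mul_inv_mul_sqrt_one_add {k j : 𝒜} (hk : 0 ≤ k) (hj : (1 + k) * j = 1) :
    sqrt (k * j) * sqrt (1 + k) = sqrt k := by
  have hstar (x : 𝒜) : star (sqrt x) = sqrt x := (sqrt_nonneg x).star_eq
  simpa only [star_mul, hstar] using congrArg star (sqrt_one_add_mul_sqrt_mul_inv hk hj)

lemma sqrt_conj_le_smul_one_add {k j a : 𝒜} {η : ℝ} (hk : 0 ≤ k) (hj : (1 + k) * j = 1)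
    (h : sqrt (k * j) * a * sqrt (k * j) ≤ η • 1) :
    sqrt k * a * sqrt k ≤ η • (1 + k) := by
  have hs : IsSelfAdjoint (sqrt (1 + k)) := .of_nonneg (sqrt_nonneg _)
  calc sqrt k * a * sqrt k
      = (sqrt (1 + k) * sqrt (k * j)) * a * (sqrt (k * j) * sqrt (1 + k)) := by
        rw [sqrt_one_add_mul_sqrt_mul_inv hk hj, sqrt_mul_inv_mul_sqrt_one_add hk hj]
    _ = sqrt (1 + k) * (sqrt (k * j) * a * sqrt (k * j)) * sqrt (1 + k) := by
        simp only [mul_assoc]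
    _ ≤ sqrt (1 + k) * (η • 1) * sqrt (1 + k) := hs.conjugate_le_conjugate h
    _ = η • (1 + k) := by
        rw [mul_smul_comm, mul_one, smul_mul_assoc,
          sqrt_mul_sqrt_self _ (add_nonneg zero_le_one hk)]

lemma sqrt_conj_sub_one_le {k j a : 𝒜} {η : ℝ} (hk : 0 ≤ k) (hj : (1 + k) * j = 1)
    (ha : IsSelfAdjoint a) (hnorm : ‖sqrt (k * j) * a * sqrt (k * j)‖ ≤ η) (hη : η ≤ 1) :
    sqrt k * (a - 1) * sqrt k ≤ η • 1 := by
  have hr : IsSelfAdjoint (sqrt (k * j)) := .of_nonneg (sqrt_nonneg _)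
  have hconj : sqrt (k * j) * a * sqrt (k * j) ≤ η • 1 := by
    simpa only [Algebra.algebraMap_eq_smul_one] using
      (ha.conjugate_self hr).le_algebraMap_norm_self.trans (algebraMap_mono 𝒜 hnorm)
  calc sqrt k * (a - 1) * sqrt k = sqrt k * a * sqrt k - k := by
        rw [mul_sub, sub_mul, mul_one, sqrt_mul_sqrt_self k hk]
    _ ≤ η • (1 + k) - k := sub_le_sub_right (sqrt_conj_le_smul_one_add hk hj hconj) k
    _ = η • 1 - (1 - η) • k := by module
    _ ≤ η • 1 := sub_le_self _ (smul_nonneg (sub_nonneg.mpr hη) hk)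

end CFC

end CStarAlgebra

theorem stmt_13_general {H : Type*} [NormedAddCommGroup H] [InnerProductSpace ℂ H]
    [CompleteSpace H]
    (K A J sqK sqR : H →L[ℂ] H) (η : ℝ)
    (hK : K.IsPositive) (hA : (A - 1).IsPositive)
    -- `J = (1+K)⁻¹`
    (hJ1 : (1 + K) * J = 1)
    -- `sqK = K^{1/2}`, the positive square root of `K`
    (hsqK : sqK.IsPositive) (hsqK2 : sqK * sqK = K)
    -- `sqR = R^{1/2}`, the positive square root of `R = K(1+K)^{−1}`
    (hsqR : sqR.IsPositive) (hsqR2 : sqR * sqR = K * J)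
    (hη : ‖sqR * A * sqR‖ = η) (hη1 : η < 1) :
    -- `1 − K^{1/2}(A−1)K^{1/2} ≥ (1−η)·1`
    ((1 - sqK * (A - 1) * sqK) - (1 - η) • (1 : H →L[ℂ] H)).IsPositive ∧
    -- `K^{1/2}(A−1)K^{1/2} ≤ η·1`
    (η • (1 : H →L[ℂ] H) - sqK * (A - 1) * sqK).IsPositive ∧
    -- `‖K^{1/2}(A−1)K^{1/2}‖ ≤ η < 1`
    ‖sqK * (A - 1) * sqK‖ ≤ η := by
  rw [← nonneg_iff_isPositive] at hK hA hsqK hsqR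
  obtain rfl : sqK = CFC.sqrt K := (CFC.sqrt_unique hsqK2 hsqK).symm
  obtain rfl : sqR = CFC.sqrt (K * J) := (CFC.sqrt_unique hsqR2 hsqR).symm
  have hAsa : IsSelfAdjoint A := by simpa using hA.isSelfAdjoint.add (.one _)
  have hle := CFC.sqrt_conj_sub_one_le hK hJ1 hAsa hη.le hη1.le
  have hnonneg : 0 ≤ CFC.sqrt K * (A - 1) * CFC.sqrt K := conjugate_nonneg_of_nonneg hA hsqK
  refine ⟨?_, hle, ?_⟩
  · rwa [sub_smul, one_smul, sub_sub_sub_cancel_left]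
  · rwa [CStarAlgebra.norm_le_iff_le_algebraMap _ (hη ▸ norm_nonneg _) hnonneg,
      Algebra.algebraMap_eq_smul_one]

/-- Let `H` be a complex Hilbert space, `K ≥ 0` bounded self-adjoint,
`A ≥ 1` bounded self-adjoint, `R = K(1+K)^{−1}`.  If `‖R^{1/2} A R^{1/2}‖ = η < 1`, then
`1 − K^{1/2}(A−1)K^{1/2} ≥ (1−η)·1`; in particular `K^{1/2}(A−1)K^{1/2} ≤ η·1` and
`‖K^{1/2}(A−1)K^{1/2}‖ ≤ η < 1`.  (Here `≥` is the Loewner order, expressed through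
positivity of differences, and the positive square roots are characterized by the
listed hypotheses.) -/
theorem stmt_13 {H : Type*} [NormedAddCommGroup H] [InnerProductSpace ℂ H]
    [CompleteSpace H]
    (K A J sqK sqR : H →L[ℂ] H) (η : ℝ)
    (hK : K.IsPositive) (hA : (A - 1).IsPositive)
    -- `J = (1+K)⁻¹`
    (hJ1 : (1 + K) * J = 1) (hJ2 : J * (1 + K) = 1)
    -- `sqK = K^{1/2}`, the positive square root of `K`
    (hsqK : sqK.IsPositive) (hsqK2 : sqK * sqK = K)
    -- `sqR = R^{1/2}`, the positive square root of `R = K(1+K)^{−1}`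
    (hsqR : sqR.IsPositive) (hsqR2 : sqR * sqR = K * J)
    (hη : ‖sqR * A * sqR‖ = η) (hη1 : η < 1) :
    -- `1 − K^{1/2}(A−1)K^{1/2} ≥ (1−η)·1`
    ((1 - sqK * (A - 1) * sqK) - (1 - η) • (1 : H →L[ℂ] H)).IsPositive ∧
    -- `K^{1/2}(A−1)K^{1/2} ≤ η·1`
    (η • (1 : H →L[ℂ] H) - sqK * (A - 1) * sqK).IsPositive ∧
    -- `‖K^{1/2}(A−1)K^{1/2}‖ ≤ η < 1`
    ‖sqK * (A - 1) * sqK‖ ≤ η :=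
  stmt_13_general K A J sqK sqR η hK hA hJ1 hsqK hsqK2 hsqR hsqR2 hη hη1
end

section
/- Let H be a complex Hilbert space, let K be a bounded self-adjoint operator on H with K ≥ 0, let A be a bounded self-adjoint operator with A ≥ 1, and set R := K(1+K)^{−1}. If ‖K^{1/2}(A − 1)K^{1/2}‖ = θ < 1, then 1 − R^{1/2} A R^{1/2} ≥ (1 − θ)(1+K)^{−1} ≥ ((1 − θ)/(1 + ‖K‖))·1; in particular 0 ≤ R^{1/2} A R^{1/2} ≤ (1 − (1 − θ)/(1 + ‖K‖))·1 and ‖R^{1/2} A R^{1/2}‖ < 1. -/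
/-!
With `J = (1 + K)⁻¹`, the elements `K`, `J` and their square roots commute, so
`R^{1/2} = K^{1/2} J^{1/2}` and `R^{1/2} (A - 1) R^{1/2} = J^{1/2} (K^{1/2} (A - 1) K^{1/2}) J^{1/2} ≤ θ J`.
Since `R = 1 - J`, this gives `1 - R^{1/2} A R^{1/2} = J - R^{1/2} (A - 1) R^{1/2} ≥ (1 - θ) J`.
Conjugating `1 + K ≤ (1 + ‖K‖) • 1` by `J^{1/2}` gives `J ≥ (1 + ‖K‖)⁻¹ • 1`.
-/

lemma commute_of_one_add_mul_eq_one {R : Type*} [Ring R] {K J : R} (hJ1 : (1 + K) * J = 1)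
    (hJ2 : J * (1 + K) = 1) : Commute K J := by
  have h : Commute (1 + K) J := hJ1.trans hJ2.symm
  simpa using h.sub_left (Commute.one_left J)

section CStarAlgebra

variable {𝒜 : Type*} [CStarAlgebra 𝒜] [PartialOrder 𝒜] [StarOrderedRing 𝒜]

lemma Commute.sqrt_sqrt {a b : 𝒜} (hab : Commute a b) :
    Commute (CFC.sqrt a) (CFC.sqrt b) :=
  ((hab.cfcₙ_nnreal NNReal.sqrt).symm.cfcₙ_nnreal NNReal.sqrt).symm

lemma CFC.sqrt_mul_of_commute {a b : 𝒜} (ha : 0 ≤ a) (hb : 0 ≤ b) (hab : Commute a b) :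
    sqrt (a * b) = sqrt a * sqrt b := by
  have hcomm := hab.sqrt_sqrt
  refine sqrt_unique ?_ ((commute_iff_mul_nonneg (sqrt_nonneg a) (sqrt_nonneg b)).1 hcomm)
  calc sqrt a * sqrt b * (sqrt a * sqrt b) = sqrt a * (sqrt b * sqrt a) * sqrt b := by noncomm_ring
    _ = sqrt a * sqrt a * (sqrt b * sqrt b) := by rw [← hcomm.eq]; noncomm_ring
    _ = a * b := by rw [sqrt_mul_sqrt_self a, sqrt_mul_sqrt_self b]

lemma conjugate_le_norm_smul_of_isSelfAdjoint {a : 𝒜} (ha : IsSelfAdjoint a) {c : 𝒜} (hc : 0 ≤ c) :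
    c * a * c ≤ ‖a‖ • (c * c) := by
  have h := conjugate_le_conjugate_of_nonneg ha.le_algebraMap_norm_self hc
  rwa [Algebra.algebraMap_eq_smul_one, mul_smul_comm, mul_one, smul_mul_assoc] at h

section InverseOfOneAdd

variable {K J : 𝒜}

lemma nonneg_of_one_add_mul_eq_one (hK : 0 ≤ K) (hJ1 : (1 + K) * J = 1)
    (hJ2 : J * (1 + K) = 1) : 0 ≤ J := by
  have h1K : 0 ≤ 1 + K := add_nonneg zero_le_one hK
  have hstar : star J = J := by
    have : star J * (1 + K) = 1 := by
      rw [← h1K.isSelfAdjoint.star_eq, ← star_mul, hJ1, star_one]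
    calc star J = star J * (1 + K) * J := by rw [mul_assoc, hJ1, mul_one]
      _ = J := by rw [this, one_mul]
  have h := star_left_conjugate_nonneg h1K J
  rwa [hstar, hJ2, one_mul] at h

lemma inv_one_add_norm_smul_one_le (hK : 0 ≤ K) (hJ1 : (1 + K) * J = 1)
    (hJ2 : J * (1 + K) = 1) : (1 + ‖K‖)⁻¹ • (1 : 𝒜) ≤ J := by
  set T := CFC.sqrt J
  have hT : T * T = J := CFC.sqrt_mul_sqrt_self J (nonneg_of_one_add_mul_eq_one hK hJ1 hJ2)
  have hTK : Commute T (1 + K) :=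
    (Commute.one_right T).add_right
      ((commute_of_one_add_mul_eq_one hJ1 hJ2).symm.cfcₙ_nnreal NNReal.sqrt)
  have hK_le : 1 + K ≤ (1 + ‖K‖) • (1 : 𝒜) := by
    rw [add_smul, one_smul, ← Algebra.algebraMap_eq_smul_one]
    exact add_le_add_right hK.isSelfAdjoint.le_algebraMap_norm_self 1
  have h := conjugate_le_conjugate_of_nonneg hK_le (CFC.sqrt_nonneg J)
  rw [hTK.eq, mul_assoc, hT, hJ1, mul_smul_comm, mul_one, smul_mul_assoc, hT] at h
  have hc : (0 : ℝ) ≤ (1 + ‖K‖)⁻¹ := by positivity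
  simpa [smul_smul, inv_mul_cancel₀ (by positivity : (1 + ‖K‖) ≠ 0)] using
    smul_le_smul_of_nonneg_left h hc

end InverseOfOneAdd

open CFC in
lemma sqrt_mul_conjugate_le {K J B : 𝒜} (hK : 0 ≤ K) (hJ : 0 ≤ J) (hKJ : Commute K J)
    (hB : IsSelfAdjoint B) :
    sqrt (K * J) * B * sqrt (K * J) ≤ ‖sqrt K * B * sqrt K‖ • J := by
  have hBK : IsSelfAdjoint (sqrt K * B * sqrt K) :=
    hB.conjugate_self (sqrt_nonneg K).isSelfAdjoint
  calc sqrt (K * J) * B * sqrt (K * J)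
      = sqrt J * (sqrt K * B * sqrt K) * sqrt J := by
        rw [sqrt_mul_of_commute hK hJ hKJ]; nth_rw 1 [hKJ.sqrt_sqrt.eq]; noncomm_ring
    _ ≤ ‖sqrt K * B * sqrt K‖ • (sqrt J * sqrt J) :=
        conjugate_le_norm_smul_of_isSelfAdjoint hBK (sqrt_nonneg J)
    _ = ‖sqrt K * B * sqrt K‖ • J := by rw [sqrt_mul_sqrt_self J hJ]

open CFC in
lemma smul_le_one_sub_sqrt_mul_conjugate {K J A : 𝒜} (hK : 0 ≤ K) (hJ1 : (1 + K) * J = 1)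
    (hJ2 : J * (1 + K) = 1) (hA : 1 ≤ A) :
    (1 - ‖sqrt K * (A - 1) * sqrt K‖) • J ≤ 1 - sqrt (K * J) * A * sqrt (K * J) := by
  have hJ := nonneg_of_one_add_mul_eq_one hK hJ1 hJ2
  have hKJ := commute_of_one_add_mul_eq_one hJ1 hJ2
  set S := sqrt (K * J)
  have hSS : S * S = 1 - J := by
    rw [sqrt_mul_sqrt_self _ ((commute_iff_mul_nonneg hK hJ).1 hKJ), ← hJ1, add_mul, one_mul,
      add_sub_cancel_left]
  calc (1 - ‖sqrt K * (A - 1) * sqrt K‖) • J = J - ‖sqrt K * (A - 1) * sqrt K‖ • J := by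
        rw [sub_smul, one_smul]
    _ ≤ J - S * (A - 1) * S :=
        sub_le_sub_left (sqrt_mul_conjugate_le hK hJ hKJ (sub_nonneg.2 hA).isSelfAdjoint) J
    _ = 1 - S * A * S := by rw [mul_sub, sub_mul, mul_one, hSS]; abel

end CStarAlgebra

open ContinuousLinearMap

/-- Let `H` be a complex Hilbert space, `K ≥ 0` bounded self-adjoint,
`A ≥ 1` bounded self-adjoint, `R = K(1+K)^{−1}`.  If `‖K^{1/2}(A−1)K^{1/2}‖ = θ < 1`,
then `1 − R^{1/2} A R^{1/2} ≥ (1−θ)(1+K)^{−1} ≥ ((1−θ)/(1+‖K‖))·1`; in particular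
`0 ≤ R^{1/2} A R^{1/2} ≤ (1 − (1−θ)/(1+‖K‖))·1` and `‖R^{1/2} A R^{1/2}‖ < 1`.
(Here `≥` is the Loewner order, expressed through positivity of differences, and the
positive square roots are characterized by the listed hypotheses.) -/
theorem stmt_14 {H : Type*} [NormedAddCommGroup H] [InnerProductSpace ℂ H]
    [CompleteSpace H]
    (K A J sqK sqR : H →L[ℂ] H) (θ : ℝ)
    (hK : K.IsPositive) (hA : (A - 1).IsPositive)
    -- `J = (1+K)⁻¹`
    (hJ1 : (1 + K) * J = 1) (hJ2 : J * (1 + K) = 1)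
    -- `sqK = K^{1/2}`, the positive square root of `K`
    (hsqK : sqK.IsPositive) (hsqK2 : sqK * sqK = K)
    -- `sqR = R^{1/2}`, the positive square root of `R = K(1+K)^{−1}`
    (hsqR : sqR.IsPositive) (hsqR2 : sqR * sqR = K * J)
    (hθ : ‖sqK * (A - 1) * sqK‖ = θ) (hθ1 : θ < 1) :
    -- `1 − R^{1/2} A R^{1/2} ≥ (1−θ)(1+K)^{−1}`
    ((1 - sqR * A * sqR) - (1 - θ) • J).IsPositive ∧
    -- `(1−θ)(1+K)^{−1} ≥ ((1−θ)/(1+‖K‖))·1`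
    ((1 - θ) • J - ((1 - θ) / (1 + ‖K‖)) • (1 : H →L[ℂ] H)).IsPositive ∧
    -- `0 ≤ R^{1/2} A R^{1/2}`
    (sqR * A * sqR).IsPositive ∧
    -- `R^{1/2} A R^{1/2} ≤ (1 − (1−θ)/(1+‖K‖))·1`
    ((1 - (1 - θ) / (1 + ‖K‖)) • (1 : H →L[ℂ] H) - sqR * A * sqR).IsPositive ∧
    -- `‖R^{1/2} A R^{1/2}‖ < 1`
    ‖sqR * A * sqR‖ < 1 := by
  simp only [← nonneg_iff_isPositive, sub_nonneg] at hK hA hsqK hsqR ⊢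
  have hθ0 : 0 ≤ θ := hθ ▸ norm_nonneg _
  have hc : 0 < 1 + ‖K‖ := by positivity
  have hG1 : (1 - θ) • J ≤ 1 - sqR * A * sqR := by
    rw [← hθ, ← CFC.sqrt_unique hsqK2 hsqK, ← CFC.sqrt_unique hsqR2 hsqR]
    exact smul_le_one_sub_sqrt_mul_conjugate hK hJ1 hJ2 hA
  have hG2 : ((1 - θ) / (1 + ‖K‖)) • (1 : H →L[ℂ] H) ≤ (1 - θ) • J := by
    rw [div_eq_mul_inv, mul_smul]
    exact smul_le_smul_of_nonneg_left (inv_one_add_norm_smul_one_le hK hJ1 hJ2) (by linarith)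
  have hG3 : 0 ≤ sqR * A * sqR := conjugate_nonneg_of_nonneg (zero_le_one.trans hA) hsqR
  have hG4 : sqR * A * sqR ≤ (1 - (1 - θ) / (1 + ‖K‖)) • (1 : H →L[ℂ] H) := by
    rw [sub_smul, one_smul, le_sub_comm]
    exact hG2.trans hG1
  have hr : 0 < (1 - θ) / (1 + ‖K‖) := div_pos (by linarith) hc
  have hr1 : (1 - θ) / (1 + ‖K‖) ≤ 1 := (div_le_one hc).2 (by linarith [norm_nonneg K])
  refine ⟨hG1, hG2, hG3, hG4, ?_⟩
  calc ‖sqR * A * sqR‖ ≤ 1 - (1 - θ) / (1 + ‖K‖) := by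
        rwa [CStarAlgebra.norm_le_iff_le_algebraMap _ (by linarith) hG3,
          Algebra.algebraMap_eq_smul_one]
    _ < 1 := by linarith
end

section
/- Let d = 3, β > 0, and let f : ℝ³ → ℝ be a bounded measurable function with f ≥ 0 and compact support. Then for every ε > 0 and every φ ∈ L²(ℝ³), ∫_{ℝ³} ε |F(√f φ)(p)|² / ( β|p|² (ε + β|p|²) ) dp ≤ (ε^{1/2}/β^{3/2}) · C₃ · ‖f‖₁ ‖φ‖₂², where C₃ = (2π)^{−3} ∫_{ℝ³} dq / ( |q|² (1 + |q|²) ) < ∞. More generally, for any integer dimension d with 2 < d < 4 the same bound holds with ε^{(d−2)/2}/β^{d/2} in place of ε^{1/2}/β^{3/2} and C_d = (2π)^{−d} ∫_{ℝ^d} dq/(|q|²(1+|q|²)). -/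
open MeasureTheory

/-!
Uniformly in `p`, `|F(√f φ)(p)| ≤ (2π)^(-d/2) ∫ √f |φ| ≤ (2π)^(-d/2) ‖f‖₁^(1/2) ‖φ‖₂` by
Cauchy–Schwarz, so the integral is at most `(2π)^(-d) ‖f‖₁ ‖φ‖₂²` times the integral of the weight
`ε / (β|p|²(ε + β|p|²))`. Substituting `p = √(ε/β) q` turns the weight into
`ε⁻¹ (|q|²(1 + |q|²))⁻¹`, and the Jacobian `(ε/β)^(d/2)` produces the prefactor
`ε^((d-2)/2) / β^(d/2)`. In dimension 3 the rescaled weight is integrable: it behaves like `|q|⁻²`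
at the origin and like `|q|⁻⁴` at infinity.
-/

/-- The Fourier transform with the convention
`(F h)(p) = (2π)^(−d/2) ∫ e^(−i p·x) h(x) dx`, defined pointwise by the integral. -/
noncomputable def Ftrans {d : ℕ} (h : EuclideanSpace ℝ (Fin d) → ℂ)
    (p : EuclideanSpace ℝ (Fin d)) : ℂ :=
  (((2 * Real.pi) ^ (-(d : ℝ) / 2) : ℝ) : ℂ) *
    ∫ x : EuclideanSpace ℝ (Fin d),
      Complex.exp (-(Complex.I * ((inner ℝ p x : ℝ) : ℂ))) * h x

lemma integral_sqrt_mul_norm_le {α E : Type*} [MeasurableSpace α] {μ : Measure α}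
    [NormedAddCommGroup E] {f : α → ℝ} {g : α → E} (hf0 : ∀ x, 0 ≤ f x)
    (hf : Integrable f μ) (hg : MemLp g 2 μ) :
    ∫ x, √(f x) * ‖g x‖ ∂μ ≤ √(∫ x, f x ∂μ) * √(∫ x, ‖g x‖ ^ 2 ∂μ) := by
  have hsqrt : MemLp (fun x => √(f x)) 2 μ := by
    refine (memLp_two_iff_integrable_sq
      (Real.continuous_sqrt.comp_aestronglyMeasurable hf.aestronglyMeasurable)).mpr ?_
    exact hf.congr (ae_of_all _ fun x => (Real.sq_sqrt (hf0 x)).symm)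
  have hg' := hg.norm
  rw [← ENNReal.ofReal_ofNat 2] at hsqrt hg'
  simpa only [norm_norm, Real.norm_of_nonneg (Real.sqrt_nonneg _), Real.rpow_two,
    Real.sq_sqrt (hf0 _), ← Real.sqrt_eq_rpow] using
    integral_mul_norm_le_Lp_mul_Lq Real.HolderConjugate.two_two hsqrt hg'

lemma norm_Ftrans_le {d : ℕ} (h : EuclideanSpace ℝ (Fin d) → ℂ) (p : EuclideanSpace ℝ (Fin d)) :
    ‖Ftrans h p‖ ≤ (2 * Real.pi) ^ (-(d : ℝ) / 2) * ∫ x, ‖h x‖ := by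
  have hc : 0 ≤ (2 * Real.pi) ^ (-(d : ℝ) / 2) := by positivity
  rw [Ftrans, norm_mul, Complex.norm_real, Real.norm_of_nonneg hc]
  refine mul_le_mul_of_nonneg_left ((norm_integral_le_integral_norm _).trans_eq ?_) hc
  congr 1 with x
  rw [norm_mul, Complex.norm_exp]
  simp

lemma sq_norm_Ftrans_sqrt_mul_le {d : ℕ} {f : EuclideanSpace ℝ (Fin d) → ℝ}
    {φ : EuclideanSpace ℝ (Fin d) → ℂ} (hf0 : ∀ x, 0 ≤ f x) (hf : Integrable f)
    (hφ : MemLp φ 2) (p : EuclideanSpace ℝ (Fin d)) :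
    ‖Ftrans (fun x => (√(f x) : ℂ) * φ x) p‖ ^ 2 ≤
      (2 * Real.pi) ^ (-(d : ℝ)) * (∫ x, f x) * ∫ x, ‖φ x‖ ^ 2 := by
  have hc : 0 ≤ (2 * Real.pi) ^ (-(d : ℝ) / 2) := by positivity
  have hnorm : ∀ x, ‖(√(f x) : ℂ) * φ x‖ = √(f x) * ‖φ x‖ := fun x => by
    rw [norm_mul, Complex.norm_real, Real.norm_of_nonneg (Real.sqrt_nonneg _)]
  have hbound := (norm_Ftrans_le _ p).trans <| mul_le_mul_of_nonneg_left
    ((integral_congr_ae (ae_of_all _ hnorm)).trans_le (integral_sqrt_mul_norm_le hf0 hf hφ)) hc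
  calc ‖Ftrans (fun x => (√(f x) : ℂ) * φ x) p‖ ^ 2
      ≤ ((2 * Real.pi) ^ (-(d : ℝ) / 2) * (√(∫ x, f x) * √(∫ x, ‖φ x‖ ^ 2))) ^ 2 :=
        pow_le_pow_left₀ (norm_nonneg _) hbound 2
    _ = (2 * Real.pi) ^ (-(d : ℝ)) * (∫ x, f x) * ∫ x, ‖φ x‖ ^ 2 := by
      rw [mul_pow, mul_pow, Real.sq_sqrt (integral_nonneg hf0),
        Real.sq_sqrt (integral_nonneg fun x => sq_nonneg _), ← Real.rpow_natCast,
        ← Real.rpow_mul (by positivity)]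
      ring_nf

section Scaling

variable {E : Type*} [NormedAddCommGroup E] [NormedSpace ℝ E] {β ε : ℝ}

/-- At `p = 0` both sides vanish only through the conventions `ε / 0 = 0` and `0⁻¹ = 0`. -/
lemma div_mul_add_eq_inv_mul_comp_smul (hβ : 0 < β) (hε : 0 < ε) (p : E) :
    ε / (β * ‖p‖ ^ 2 * (ε + β * ‖p‖ ^ 2)) =
      ε⁻¹ * (‖(√(ε / β))⁻¹ • p‖ ^ 2 * (1 + ‖(√(ε / β))⁻¹ • p‖ ^ 2))⁻¹ := by
  have hnorm : ‖(√(ε / β))⁻¹ • p‖ ^ 2 = β / ε * ‖p‖ ^ 2 := by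
    rw [norm_smul, mul_pow, norm_inv, Real.norm_of_nonneg (Real.sqrt_nonneg _), inv_pow,
      Real.sq_sqrt (div_pos hε hβ).le, inv_div]
  rw [hnorm]
  rcases eq_or_ne ‖p‖ 0 with hp | hp
  · simp [hp]
  · field_simp

variable [FiniteDimensional ℝ E] [MeasurableSpace E] [BorelSpace E] (μ : Measure E)
  [μ.IsAddHaarMeasure]

lemma integrable_inv_sq_mul_one_add_sq (hE : Module.finrank ℝ E = 3) :
    Integrable (fun q : E => (‖q‖ ^ 2 * (1 + ‖q‖ ^ 2))⁻¹) μ := by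
  have : Nontrivial E := Module.nontrivial_of_finrank_eq_succ hE
  refine (integrable_fun_norm_addHaar μ (f := fun r => (r ^ 2 * (1 + r ^ 2))⁻¹)).mpr ?_
  refine integrable_inv_one_add_sq.integrableOn.congr_fun (fun r (hr : 0 < r) => ?_)
    measurableSet_Ioi
  rw [hE, smul_eq_mul]
  field_simp

lemma integrable_div_mul_add (hβ : 0 < β) (hε : 0 < ε)
    (hG : Integrable (fun q : E => (‖q‖ ^ 2 * (1 + ‖q‖ ^ 2))⁻¹) μ) :
    Integrable (fun p : E => ε / (β * ‖p‖ ^ 2 * (ε + β * ‖p‖ ^ 2))) μ := by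
  simp_rw [div_mul_add_eq_inv_mul_comp_smul hβ hε]
  exact (hG.comp_smul (inv_ne_zero (Real.sqrt_pos.2 (div_pos hε hβ)).ne')).const_mul _

lemma integral_div_mul_add (hβ : 0 < β) (hε : 0 < ε) :
    ∫ p : E, ε / (β * ‖p‖ ^ 2 * (ε + β * ‖p‖ ^ 2)) ∂μ =
      ε ^ (((Module.finrank ℝ E : ℝ) - 2) / 2) / β ^ ((Module.finrank ℝ E : ℝ) / 2) *
        ∫ q : E, (‖q‖ ^ 2 * (1 + ‖q‖ ^ 2))⁻¹ ∂μ := by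
  simp_rw [div_mul_add_eq_inv_mul_comp_smul hβ hε]
  rw [integral_const_mul, Measure.integral_comp_inv_smul_of_nonneg μ
      (fun q : E => (‖q‖ ^ 2 * (1 + ‖q‖ ^ 2))⁻¹) (Real.sqrt_nonneg _), smul_eq_mul, ← mul_assoc]
  congr 1
  rw [Real.sqrt_eq_rpow, ← Real.rpow_natCast, ← Real.rpow_mul (div_pos hε hβ).le,
    Real.div_rpow hε.le hβ.le, sub_div, Real.rpow_sub hε, div_self two_ne_zero, Real.rpow_one]
  ring_nf

end Scaling

/-- For any integer dimension `2 < d < 4` (so in particular `d = 3`),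
`β > 0`, `f ≥ 0` bounded measurable with compact support, `ε > 0` and `φ ∈ L²(ℝ^d)`,
`∫ ε |F(√f φ)(p)|² / (β|p|² (ε + β|p|²)) dp ≤ (ε^{(d−2)/2}/β^{d/2}) C_d ‖f‖₁ ‖φ‖₂²`,
where `C_d = (2π)^{−d} ∫ dq/(|q|²(1+|q|²)) < ∞`. -/
theorem stmt_17 (d : ℕ) (hd2 : 2 < d) (hd4 : d < 4) (β : ℝ) (hβ : 0 < β)
    (f : EuclideanSpace ℝ (Fin d) → ℝ) (hf_meas : Measurable f)
    (hf0 : ∀ x, 0 ≤ f x) (hf_bdd : ∃ M, ∀ x, f x ≤ M) (hf_supp : HasCompactSupport f)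
    (ε : ℝ) (hε : 0 < ε)
    (φ : EuclideanSpace ℝ (Fin d) → ℂ) (hφ : MemLp φ 2 volume) :
    -- the constant `C_d` is finite: the defining integrand is integrable
    Integrable (fun q : EuclideanSpace ℝ (Fin d) =>
        (‖q‖ ^ 2 * (1 + ‖q‖ ^ 2))⁻¹) volume ∧
    -- the main estimate
    (∫ p : EuclideanSpace ℝ (Fin d),
        ε * ‖Ftrans (fun x => (Real.sqrt (f x) : ℂ) * φ x) p‖ ^ 2 /
          (β * ‖p‖ ^ 2 * (ε + β * ‖p‖ ^ 2)))
      ≤ ε ^ (((d : ℝ) - 2) / 2) / β ^ ((d : ℝ) / 2) *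
          ((2 * Real.pi) ^ (-(d : ℝ)) *
            ∫ q : EuclideanSpace ℝ (Fin d), (‖q‖ ^ 2 * (1 + ‖q‖ ^ 2))⁻¹) *
          (∫ x, f x) * ∫ x, ‖φ x‖ ^ 2 := by
  have hG := integrable_inv_sq_mul_one_add_sq (volume : Measure (EuclideanSpace ℝ (Fin d)))
    (by rw [finrank_euclideanSpace_fin]; omega)
  refine ⟨hG, ?_⟩
  obtain ⟨M, hM⟩ := hf_bdd
  have hf : Integrable f := memLp_one_iff_integrable.mp <| hf_supp.memLp_of_bound
    hf_meas.aestronglyMeasurable M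
    (ae_of_all _ fun x => (Real.norm_of_nonneg (hf0 x)).trans_le (hM x))
  set K := (2 * Real.pi) ^ (-(d : ℝ)) * (∫ x, f x) * ∫ x, ‖φ x‖ ^ 2
  calc _ ≤ ∫ p : EuclideanSpace ℝ (Fin d), K * (ε / (β * ‖p‖ ^ 2 * (ε + β * ‖p‖ ^ 2))) := by
        refine integral_mono_of_nonneg (ae_of_all _ fun p => by positivity)
          ((integrable_div_mul_add _ hβ hε hG).const_mul K) (ae_of_all _ fun p => ?_)
        dsimp only
        rw [mul_comm ε, mul_div_assoc]
        exact mul_le_mul_of_nonneg_right (sq_norm_Ftrans_sqrt_mul_le hf0 hf hφ p) (by positivity)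
    _ = _ := by
        rw [integral_const_mul, integral_div_mul_add _ hβ hε, finrank_euclideanSpace_fin]
        ring
end
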